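/- arXiv:2502.06387 — 2 statements merged into one kernel-verified Lean document; each statement's English description precedes it below -/
import Mathlib

section
/- For any two probability measures Q and P on a measurable space, the total variation distance satisfies TV(Q, P) ≤ sqrt(1 - exp(-D_KL(Q‖P))) ≤ 1 - (1/2)·exp(-D_KL(Q‖P)) (the Bretagnolle–Huber inequality), where D_KL denotes Kullback–Leibler divergence. -/
/-!
Write `g = dQ/dP`. Both `Q` and `P` dominate the measure with density `min g 1` with respect to
`P`, so `TV(Q, P) ≤ 1 - A` with `A = ∫ min g 1 dP`. Since `√g = √(min g 1 * max g 1)` and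
`∫ max g 1 dP = 2 - A`, Cauchy–Schwarz bounds the Bhattacharyya coefficient `∫ √g dP` by
`√(A (2 - A)) = √(1 - (1 - A)²) ≤ √(1 - TV²)` (Le Cam). Jensen's inequality for `exp` gives
`exp (-KL / 2) ≤ ∫ exp (-llr / 2) dQ = ∫ √g dP`, and squaring yields `exp (-KL) ≤ 1 - TV²`.
-/

open MeasureTheory Real

/-- Total variation distance between two measures. -/
noncomputable def tvDist {Ω : Type*} [MeasurableSpace Ω] (Q P : Measure Ω) : ℝ :=
  ⨆ s : {s : Set Ω // MeasurableSet s}, |(Q s).toReal - (P s).toReal|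

lemma Real.sqrt_one_sub_le_one_sub_half {t : ℝ} (ht : t ≤ 2) : √(1 - t) ≤ 1 - 1 / 2 * t :=
  Real.sqrt_le_iff.mpr ⟨by linarith, by nlinarith [sq_nonneg t]⟩

lemma Real.mul_exp_neg_log_div_two {t : ℝ} (ht : 0 ≤ t) : t * exp (-log t / 2) = √t := by
  rcases ht.eq_or_lt with rfl | ht
  · simp
  · rw [Real.sqrt_eq_rpow, Real.rpow_def_of_pos ht]
    nth_rewrite 1 [← Real.exp_log ht]
    rw [← Real.exp_add]
    ring_nf

section

variable {α : Type*} [MeasurableSpace α] {μ : Measure α} {u v : α → ℝ}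

lemma MeasureTheory.Integrable.memLp_two_sqrt (hu : Integrable u μ) (hu0 : 0 ≤ᵐ[μ] u) :
    MemLp (fun x ↦ √(u x)) 2 μ := by
  rw [memLp_two_iff_integrable_sq hu.aemeasurable.sqrt.aestronglyMeasurable]
  refine hu.congr ?_
  filter_upwards [hu0] with x hx using (Real.sq_sqrt hx).symm

lemma sq_integral_sqrt_mul_le (hu0 : 0 ≤ᵐ[μ] u) (hv0 : 0 ≤ᵐ[μ] v)
    (hu : Integrable u μ) (hv : Integrable v μ) :
    (∫ x, √(u x * v x) ∂μ) ^ 2 ≤ (∫ x, u x ∂μ) * ∫ x, v x ∂μ := by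
  have holder := integral_mul_le_Lp_mul_Lq_of_nonneg Real.HolderConjugate.two_two
    (ae_of_all _ fun x ↦ Real.sqrt_nonneg (u x)) (ae_of_all _ fun x ↦ Real.sqrt_nonneg (v x))
    (by simpa using hu.memLp_two_sqrt hu0) (by simpa using hv.memLp_two_sqrt hv0)
  have hsqrt_mul : ∫ x, √(u x * v x) ∂μ = ∫ x, √(u x) * √(v x) ∂μ :=
    integral_congr_ae (by filter_upwards [hu0] with x hx using Real.sqrt_mul hx _)
  have rpow_two_sqrt : ∀ {w : α → ℝ}, 0 ≤ᵐ[μ] w → ∫ x, √(w x) ^ (2 : ℝ) ∂μ = ∫ x, w x ∂μ :=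
    fun {w} hw0 ↦ integral_congr_ae (by
      filter_upwards [hw0] with x hx
      rw [Real.rpow_two, Real.sq_sqrt hx])
  rw [rpow_two_sqrt hu0, rpow_two_sqrt hv0] at holder
  rw [hsqrt_mul]
  calc (∫ x, √(u x) * √(v x) ∂μ) ^ 2
      ≤ ((∫ x, u x ∂μ) ^ (1 / 2 : ℝ) * (∫ x, v x ∂μ) ^ (1 / 2 : ℝ)) ^ 2 :=
        pow_le_pow_left₀ (integral_nonneg fun x ↦ by positivity) holder 2
    _ = (∫ x, u x ∂μ) * ∫ x, v x ∂μ := by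
        rw [mul_pow, ← Real.sqrt_eq_rpow, ← Real.sqrt_eq_rpow,
          Real.sq_sqrt (integral_nonneg_of_ae hu0), Real.sq_sqrt (integral_nonneg_of_ae hv0)]

end

section

variable {Ω : Type*} [MeasurableSpace Ω] {Q P : Measure Ω}

lemma tvDist_nonneg : 0 ≤ tvDist Q P :=
  Real.iSup_nonneg fun _ ↦ abs_nonneg _

variable [IsProbabilityMeasure Q] [IsProbabilityMeasure P]

lemma tvDist_le_one_sub_integral_min_rnDeriv :
    tvDist Q P ≤ 1 - ∫ x, min (Q.rnDeriv P x).toReal 1 ∂P := by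
  have hint : Integrable (fun x ↦ min (Q.rnDeriv P x).toReal 1) P :=
    Measure.integrable_toReal_rnDeriv.inf (integrable_const 1)
  have le_Q : ∀ t, ∫ x in t, min (Q.rnDeriv P x).toReal 1 ∂P ≤ Q.real t := fun t ↦
    (setIntegral_mono hint.integrableOn Measure.integrable_toReal_rnDeriv.integrableOn
      fun x ↦ min_le_left _ _).trans (Measure.setIntegral_toReal_rnDeriv_le (measure_ne_top Q t))
  have le_P : ∀ t, ∫ x in t, min (Q.rnDeriv P x).toReal 1 ∂P ≤ P.real t := fun t ↦ by
    simpa using setIntegral_mono hint.integrableOn (integrable_const 1).integrableOn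
      fun x ↦ min_le_right _ _
  refine ciSup_le fun ⟨s, hs⟩ ↦ ?_
  have hsplit := integral_add_compl hs hint
  have hQ := probReal_add_probReal_compl (μ := Q) hs
  have hP := probReal_add_probReal_compl (μ := P) hs
  rw [abs_sub_le_iff]
  constructor <;>
    linarith [le_Q s, le_Q sᶜ, le_P s, le_P sᶜ, measureReal_def Q s, measureReal_def P s]

lemma integral_min_add_integral_max_rnDeriv (hQP : Q ≪ P) :
    ∫ x, min (Q.rnDeriv P x).toReal 1 ∂P + ∫ x, max (Q.rnDeriv P x).toReal 1 ∂P = 2 := by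
  have hg : Integrable (fun x ↦ (Q.rnDeriv P x).toReal) P := Measure.integrable_toReal_rnDeriv
  have hmin : Integrable (fun x ↦ min (Q.rnDeriv P x).toReal 1) P := hg.inf (integrable_const 1)
  have hmax : Integrable (fun x ↦ max (Q.rnDeriv P x).toReal 1) P := hg.sup (integrable_const 1)
  rw [← integral_add hmin hmax]
  simp only [min_add_max]
  rw [integral_add hg (integrable_const 1), Measure.integral_toReal_rnDeriv hQP]
  norm_num

lemma sq_integral_sqrt_rnDeriv_le_one_sub_sq_tvDist (hQP : Q ≪ P) :
    (∫ x, √(Q.rnDeriv P x).toReal ∂P) ^ 2 ≤ 1 - tvDist Q P ^ 2 := by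
  have hg : Integrable (fun x ↦ (Q.rnDeriv P x).toReal) P := Measure.integrable_toReal_rnDeriv
  have cauchy_schwarz := sq_integral_sqrt_mul_le (μ := P)
    (ae_of_all _ fun x ↦ le_min ENNReal.toReal_nonneg zero_le_one)
    (ae_of_all _ fun x ↦ zero_le_one.trans (le_max_right _ _))
    (hg.inf (integrable_const 1)) (hg.sup (integrable_const 1))
  have hmax : ∫ x, max (Q.rnDeriv P x).toReal 1 ∂P =
      2 - ∫ x, min (Q.rnDeriv P x).toReal 1 ∂P := by
    linarith [integral_min_add_integral_max_rnDeriv hQP]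
  simp only [min_mul_max, mul_one, hmax] at cauchy_schwarz
  nlinarith [tvDist_le_one_sub_integral_min_rnDeriv (Q := Q) (P := P),
    tvDist_nonneg (Q := Q) (P := P)]

lemma exp_neg_half_integral_llr_le_integral_sqrt_rnDeriv (hQP : Q ≪ P)
    (hint : Integrable (llr Q P) Q) :
    exp (-(∫ x, llr Q P x ∂Q) / 2) ≤ ∫ x, √(Q.rnDeriv P x).toReal ∂P := by
  have change_of_measure : ∀ x, (Q.rnDeriv P x).toReal * exp (-llr Q P x / 2) =
      √(Q.rnDeriv P x).toReal := fun x ↦ Real.mul_exp_neg_log_div_two ENNReal.toReal_nonneg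
  have hexp : Integrable (fun x ↦ exp (-llr Q P x / 2)) Q := by
    rw [← integrable_toReal_rnDeriv_mul_iff hQP]
    simp only [change_of_measure]
    exact (Measure.integrable_toReal_rnDeriv.memLp_two_sqrt
      (ae_of_all _ fun _ ↦ ENNReal.toReal_nonneg)).integrable one_le_two
  calc exp (-(∫ x, llr Q P x ∂Q) / 2) = exp (∫ x, -llr Q P x / 2 ∂Q) := by
        rw [integral_div, integral_neg]
    _ ≤ ∫ x, exp (-llr Q P x / 2) ∂Q :=
        convexOn_exp.map_integral_le continuous_exp.continuousOn isClosed_univ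
          (ae_of_all _ fun _ ↦ Set.mem_univ _) (hint.neg.div_const 2) hexp
    _ = ∫ x, √(Q.rnDeriv P x).toReal ∂P := by
        simp only [← change_of_measure, integral_toReal_rnDeriv_mul hQP]

end

/-- The Bretagnolle–Huber inequality:
`TV(Q, P) ≤ √(1 - exp(-D_KL(Q‖P))) ≤ 1 - (1/2) exp(-D_KL(Q‖P))`,
where `D_KL(Q‖P) = ∫ log(dQ/dP) dQ` for `Q ≪ P`. -/
theorem bretagnolle_huber {Ω : Type*} [MeasurableSpace Ω]
    (Q P : Measure Ω) [IsProbabilityMeasure Q] [IsProbabilityMeasure P]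
    (hQP : Q ≪ P) (hint : Integrable (llr Q P) Q) :
    tvDist Q P ≤ Real.sqrt (1 - Real.exp (-(∫ x, llr Q P x ∂Q))) ∧
    Real.sqrt (1 - Real.exp (-(∫ x, llr Q P x ∂Q)))
      ≤ 1 - (1 / 2) * Real.exp (-(∫ x, llr Q P x ∂Q)) := by
  set K := ∫ x, llr Q P x ∂Q
  have exp_le : exp (-K) ≤ 1 - tvDist Q P ^ 2 :=
    calc exp (-K) = exp (-K / 2) ^ 2 := by rw [← Real.exp_nat_mul]; ring_nf
      _ ≤ (∫ x, √(Q.rnDeriv P x).toReal ∂P) ^ 2 := pow_le_pow_left₀ (exp_nonneg _)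
          (exp_neg_half_integral_llr_le_integral_sqrt_rnDeriv hQP hint) 2
      _ ≤ 1 - tvDist Q P ^ 2 := sq_integral_sqrt_rnDeriv_le_one_sub_sq_tvDist hQP
  exact ⟨(le_abs_self _).trans (Real.abs_le_sqrt (by linarith)),
    Real.sqrt_one_sub_le_one_sub_half (by nlinarith [sq_nonneg (tvDist Q P)])⟩
end

section
/- Let X be a non-constant real random variable taking values in a bounded interval, and let φ be a strictly concave C² function on that interval. Then E[φ(X)] < φ(E[X]), and moreover inf_{s}(−φ''(s)/2)·Var(X) ≤ φ(E[X]) − E[φ(X)] ≤ sup_s(−φ''(s)/2)·Var(X), where inf and sup are over the interval. -/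
open MeasureTheory

/-- Pointwise Taylor-type upper bound. -/
lemma taylor_upper_aux (l u m : ℝ) (φ φ' φ'' : ℝ → ℝ)
    (hd1 : ∀ s ∈ Set.Icc l u, HasDerivAt φ (φ' s) s)
    (hd2 : ∀ s ∈ Set.Icc l u, HasDerivAt φ' (φ'' s) s)
    (hm : ∀ s ∈ Set.Icc l u, m ≤ -φ'' s)
    {s t : ℝ} (hs : s ∈ Set.Icc l u) (ht : t ∈ Set.Icc l u) :
    φ t ≤ φ s + φ' s * (t - s) - m / 2 * (t - s) ^ 2 := by
  set h : ℝ → ℝ := fun x => φ' s - φ' x - m * (x - s) with hh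
  set g : ℝ → ℝ := fun x => φ s + φ' s * (x - s) - m / 2 * (x - s) ^ 2 - φ x with hg
  have hhd : ∀ x ∈ Set.Icc l u, HasDerivAt h (-φ'' x - m) x := by
    intro x hx
    have h1 : HasDerivAt (fun y : ℝ => m * (y - s)) (m * 1) x :=
      ((hasDerivAt_id x).sub_const s).const_mul m
    have h2 := ((hd2 x hx).const_sub (φ' s)).sub h1
    exact h2.congr_deriv (by ring)
  have hgd : ∀ x ∈ Set.Icc l u, HasDerivAt g (h x) x := by
    intro x hx
    have h1 : HasDerivAt (fun y : ℝ => φ' s * (y - s)) (φ' s * 1) x :=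
      ((hasDerivAt_id x).sub_const s).const_mul (φ' s)
    have h2 : HasDerivAt (fun y : ℝ => m / 2 * (y - s) ^ 2)
        (m / 2 * (2 * (x - s) ^ 1 * 1)) x :=
      (((hasDerivAt_id x).sub_const s).pow 2).const_mul (m / 2)
    have h3 := ((h1.const_add (φ s)).sub h2).sub (hd1 x hx)
    exact h3.congr_deriv (by simp [hh]; ring)
  have hhmono : MonotoneOn h (Set.Icc l u) := by
    apply monotoneOn_of_deriv_nonneg (convex_Icc l u)
    · exact fun x hx => (hhd x hx).continuousAt.continuousWithinAt
    · intro x hx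
      exact ((hhd x (interior_subset hx)).differentiableAt).differentiableWithinAt
    · intro x hx
      rw [(hhd x (interior_subset hx)).deriv]
      have := hm x (interior_subset hx)
      linarith
  have hhs : h s = 0 := by simp [hh]
  have hgs : g s = 0 := by simp [hg]
  have hgc : ∀ x ∈ Set.Icc l u, ContinuousWithinAt g (Set.Icc l u) x :=
    fun x hx => (hgd x hx).continuousAt.continuousWithinAt
  have key : 0 ≤ g t := by
    rcases le_total s t with hst | hst
    · -- monotone on Icc s u
      have hsub : Set.Icc s u ⊆ Set.Icc l u := Set.Icc_subset_Icc hs.1 le_rfl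
      have : MonotoneOn g (Set.Icc s u) := by
        apply monotoneOn_of_deriv_nonneg (convex_Icc s u)
        · exact fun x hx => (hgc x (hsub hx)).mono hsub
        · intro x hx
          exact ((hgd x (hsub (interior_subset hx))).differentiableAt).differentiableWithinAt
        · intro x hx
          rw [interior_Icc] at hx
          have hx' : x ∈ Set.Icc l u := hsub (Set.Ioo_subset_Icc_self hx)
          rw [(hgd x hx').deriv]
          calc (0:ℝ) = h s := hhs.symm
            _ ≤ h x := hhmono hs hx' hx.1.le
      calc (0:ℝ) = g s := hgs.symm
        _ ≤ g t := this (Set.left_mem_Icc.2 (hst.trans ht.2)) ⟨hst, ht.2⟩ hst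
    · -- antitone on Icc l s
      have hsub : Set.Icc l s ⊆ Set.Icc l u := Set.Icc_subset_Icc le_rfl hs.2
      have : AntitoneOn g (Set.Icc l s) := by
        apply antitoneOn_of_deriv_nonpos (convex_Icc l s)
        · exact fun x hx => (hgc x (hsub hx)).mono hsub
        · intro x hx
          exact ((hgd x (hsub (interior_subset hx))).differentiableAt).differentiableWithinAt
        · intro x hx
          rw [interior_Icc] at hx
          have hx' : x ∈ Set.Icc l u := hsub (Set.Ioo_subset_Icc_self hx)
          rw [(hgd x hx').deriv]
          calc h x ≤ h s := hhmono hx' hs hx.2.le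
            _ = 0 := hhs
      calc (0:ℝ) = g s := hgs.symm
        _ ≤ g t := this ⟨ht.1, hst⟩ (Set.right_mem_Icc.2 (ht.1.trans hst)) hst
  simp only [hg] at key
  linarith

/-- Sharpened Jensen inequality: for a strictly concave `C²` function `φ` on `[l,u]`
and a non-constant bounded random variable `X`, the Jensen gap satisfies
`E[φ(X)] < φ(E[X])` and
`(m/2) Var(X) ≤ φ(E[X]) - E[φ(X)] ≤ (M/2) Var(X)`,
where `m = inf (-φ'')` and `M = sup (-φ'')` over `[l,u]`. -/
theorem sharpened_jensen {Ω : Type*} [MeasurableSpace Ω]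
    (μ : Measure Ω) [IsProbabilityMeasure μ]
    (X : Ω → ℝ) (hX : Integrable X μ) (l u : ℝ)
    (hrange : ∀ ω, X ω ∈ Set.Icc l u)
    (φ φ' φ'' : ℝ → ℝ)
    (hd1 : ∀ s ∈ Set.Icc l u, HasDerivAt φ (φ' s) s)
    (hd2 : ∀ s ∈ Set.Icc l u, HasDerivAt φ' (φ'' s) s)
    (hφint : Integrable (fun ω => φ (X ω)) μ)
    (hstrict : StrictConcaveOn ℝ (Set.Icc l u) φ)
    (hnonconst : ¬ (∀ᵐ ω ∂μ, X ω = ∫ x, X x ∂μ))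
    (m M : ℝ) (hm : ∀ s ∈ Set.Icc l u, m ≤ -φ'' s) (hM : ∀ s ∈ Set.Icc l u, -φ'' s ≤ M) :
    (∫ ω, φ (X ω) ∂μ < φ (∫ ω, X ω ∂μ)) ∧
    m / 2 * (∫ ω, (X ω - ∫ x, X x ∂μ) ^ 2 ∂μ)
      ≤ φ (∫ ω, X ω ∂μ) - ∫ ω, φ (X ω) ∂μ ∧
    φ (∫ ω, X ω ∂μ) - ∫ ω, φ (X ω) ∂μ
      ≤ M / 2 * (∫ ω, (X ω - ∫ x, X x ∂μ) ^ 2 ∂μ) := by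
  set c : ℝ := ∫ ω, X ω ∂μ with hc
  have hlu : ∀ ω, l ≤ X ω ∧ X ω ≤ u := fun ω => hrange ω
  have hcl : l ≤ c := by
    have := integral_mono (integrable_const l) hX (fun ω => (hrange ω).1)
    simpa using this
  have hcu : c ≤ u := by
    have := integral_mono hX (integrable_const u) (fun ω => (hrange ω).2)
    simpa using this
  have hcmem : c ∈ Set.Icc l u := ⟨hcl, hcu⟩
  -- integrability of (X - c)^2
  have hXm : AEStronglyMeasurable X μ := hX.aestronglyMeasurable
  have hsq : Integrable (fun ω => (X ω - c) ^ 2) μ := by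
    apply Integrable.mono' (integrable_const ((u - l) ^ 2))
    · exact ((hXm.sub aestronglyMeasurable_const).pow 2)
    · refine Filter.Eventually.of_forall fun ω => ?_
      rw [Real.norm_eq_abs, abs_pow, sq_abs]
      have h1 := (hrange ω).1
      have h2 := (hrange ω).2
      have : |X ω - c| ≤ u - l := by
        rw [abs_sub_le_iff]; constructor <;> linarith
      calc (X ω - c) ^ 2 = |X ω - c| ^ 2 := by rw [sq_abs]
        _ ≤ (u - l) ^ 2 := by
            apply pow_le_pow_left₀ (abs_nonneg _) this
  have hXc : Integrable (fun ω => X ω - c) μ := hX.sub (integrable_const c)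
  have hXc0 : ∫ ω, (X ω - c) ∂μ = 0 := by
    rw [integral_sub hX (integrable_const c)]
    simp [hc]
  -- upper pointwise bound with m
  have hub : ∀ ω, φ (X ω) ≤ φ c + φ' c * (X ω - c) - m / 2 * (X ω - c) ^ 2 :=
    fun ω => taylor_upper_aux l u m φ φ' φ'' hd1 hd2 hm hcmem (hrange ω)
  -- lower pointwise bound with M (apply aux to -φ)
  have hlb : ∀ ω, φ c + φ' c * (X ω - c) - M / 2 * (X ω - c) ^ 2 ≤ φ (X ω) := by
    intro ω
    have := taylor_upper_aux l u (-M) (fun x => -φ x) (fun x => -φ' x) (fun x => -φ'' x)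
      (fun s hs => (hd1 s hs).neg) (fun s hs => (hd2 s hs).neg)
      (fun s hs => by simp only [neg_neg]; linarith [hM s hs]) hcmem (hrange ω)
    linarith [this]
  -- the affine+quadratic comparison function is integrable
  have hint1 : Integrable (fun ω => φ c + φ' c * (X ω - c) - m / 2 * (X ω - c) ^ 2) μ :=
    ((integrable_const (φ c)).add (hXc.const_mul (φ' c))).sub (hsq.const_mul (m / 2))
  have hint2 : Integrable (fun ω => φ c + φ' c * (X ω - c) - M / 2 * (X ω - c) ^ 2) μ :=
    ((integrable_const (φ c)).add (hXc.const_mul (φ' c))).sub (hsq.const_mul (M / 2))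
  have hcomp : ∀ (k : ℝ), ∫ ω, (φ c + φ' c * (X ω - c) - k / 2 * (X ω - c) ^ 2) ∂μ
      = φ c - k / 2 * ∫ ω, (X ω - c) ^ 2 ∂μ := by
    intro k
    have e1 : ∫ ω, (φ c + φ' c * (X ω - c) - k / 2 * (X ω - c) ^ 2) ∂μ
        = (∫ ω, (φ c + φ' c * (X ω - c)) ∂μ) - ∫ ω, k / 2 * (X ω - c) ^ 2 ∂μ :=
      integral_sub ((integrable_const (φ c)).add (hXc.const_mul (φ' c))) (hsq.const_mul (k / 2))
    have e2 : ∫ ω, (φ c + φ' c * (X ω - c)) ∂μ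
        = (∫ (_ : Ω), φ c ∂μ) + ∫ ω, φ' c * (X ω - c) ∂μ :=
      integral_add (integrable_const (φ c)) (hXc.const_mul (φ' c))
    rw [e1, e2, integral_const, integral_const_mul, integral_const_mul, hXc0]
    simp
  have hub' : ∫ ω, φ (X ω) ∂μ ≤ φ c - m / 2 * ∫ ω, (X ω - c) ^ 2 ∂μ := by
    rw [← hcomp m]
    exact integral_mono hφint hint1 hub
  have hlb' : φ c - M / 2 * ∫ ω, (X ω - c) ^ 2 ∂μ ≤ ∫ ω, φ (X ω) ∂μ := by
    rw [← hcomp M]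
    exact integral_mono hint2 hφint hlb
  -- strict Jensen
  have hφcont : ContinuousOn φ (Set.Icc l u) :=
    fun s hs => (hd1 s hs).continuousAt.continuousWithinAt
  have hstrictlt : ∫ ω, φ (X ω) ∂μ < φ c := by
    have := hstrict.ae_eq_const_or_lt_map_average hφcont isClosed_Icc
      (Filter.Eventually.of_forall hrange) hX hφint
    rcases this with h | h
    · exact absurd (by simpa [Function.const, average_eq_integral] using h : X =ᵐ[μ] Function.const Ω c) hnonconst
    · simpa [average_eq_integral] using h
  exact ⟨hstrictlt, by linarith, by linarith⟩
end
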